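/- arXiv:2406.09715 — 4 statements merged into one kernel-verified Lean document; each statement's English description precedes it below -/
import Mathlib

section
/- Let ρ be a bipartite density matrix on H_A ⊗ H_B whose marginals ρ_A, ρ_B are Gibbs states at inverse temperatures β_A, β_B for Hamiltonians H_A, H_B. Let U be a unitary with [U, H_A⊗1 + 1⊗H_B] = 0 and ρ' = UρU†. Then (β_A - β_B)⟨Q_A⟩ ≥ ΔI(A:B), where ⟨Q_A⟩ = Tr{(ρ'_A - ρ_A)H_A} and ΔI(A:B) = I_{ρ'}(A:B) - I_ρ(A:B) is the change in quantum mutual information. -/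
open Matrix ComplexOrder Kronecker NormedSpace

/-- Partial trace over the second factor. -/
noncomputable def ptraceB {a b : ℕ} (ρ : Matrix (Fin a × Fin b) (Fin a × Fin b) ℂ) :
    Matrix (Fin a) (Fin a) ℂ :=
  Matrix.of fun i j => ∑ k : Fin b, ρ (i, k) (j, k)

/-- Partial trace over the first factor. -/
noncomputable def ptraceA {a b : ℕ} (ρ : Matrix (Fin a × Fin b) (Fin a × Fin b) ℂ) :
    Matrix (Fin b) (Fin b) ℂ :=
  Matrix.of fun i j => ∑ k : Fin a, ρ (k, i) (k, j)

/-- The Gibbs (thermal) state `e^{-βH}/Tr e^{-βH}`. -/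
noncomputable def gibbs {n : Type*} [Fintype n] [DecidableEq n] (β : ℝ) (Hm : Matrix (n) (n) ℂ) :
    Matrix (n) (n) ℂ :=
  ((exp ((-β : ℂ) • Hm)).trace)⁻¹ • exp ((-β : ℂ) • Hm)

/-- Von Neumann entropy `-Tr ρ log ρ`, via the eigenvalues of a Hermitian matrix
(junk value `0` on non-Hermitian input). -/
noncomputable def vnEntropy {n : Type*} [Fintype n] [DecidableEq n] (ρ : Matrix (n) (n) ℂ) : ℝ :=
  if h : ρ.IsHermitian then -∑ i, (h.eigenvalues i) * Real.log (h.eigenvalues i) else 0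

/-- Logarithm of a Hermitian matrix via the spectral theorem
(junk value `0` on non-Hermitian input). -/
noncomputable def hermLog {n : Type*} [Fintype n] [DecidableEq n] (A : Matrix (n) (n) ℂ) :
    Matrix (n) (n) ℂ :=
  if h : A.IsHermitian then
    (Matrix.IsHermitian.eigenvectorUnitary h : Matrix (n) (n) ℂ)
      * Matrix.diagonal (fun i => (Real.log (h.eigenvalues i) : ℂ))
      * star (Matrix.IsHermitian.eigenvectorUnitary h : Matrix (n) (n) ℂ)
  else 0

/-- Quantum relative entropy `S(σ‖ρ) = Tr{σ log σ − σ log ρ}`. -/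
noncomputable def relEntropy {n : Type*} [Fintype n] [DecidableEq n] (σ ρ : Matrix (n) (n) ℂ) : ℝ :=
  (σ * hermLog σ - σ * hermLog ρ).trace.re

/-- Quantum mutual information `I_ρ(A:B) = S(ρ_A) + S(ρ_B) − S(ρ)`. -/
noncomputable def mutualInfo {a b : ℕ} (ρ : Matrix (Fin a × Fin b) (Fin a × Fin b) ℂ) : ℝ :=
  vnEntropy (ptraceB ρ) + vnEntropy (ptraceA ρ) - vnEntropy ρ

/-! Against the Gibbs state `γ = e^{-βH}/Z`, non-negativity of the relative entropy reads
`S(σ) ≤ β Tr(σH) + log Z`, with equality at `σ = γ`; hence `S(σ) - S(γ) ≤ β Tr((σ - γ)H)`.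
Apply this to the two marginals of `ρ' = UρU†`, whose counterparts for `ρ` are Gibbs states.
The unitary leaves `S(ρ)` unchanged and, commuting with `H_A ⊗ 1 + 1 ⊗ H_B`, conserves the
total energy, so `⟨Q_B⟩ = -⟨Q_A⟩`; adding the two marginal inequalities gives the claim.

For the relative entropy bound write `σ = ∑ pᵢ |uᵢ⟩⟨uᵢ|` and `H = ∑ eⱼ |vⱼ⟩⟨vⱼ|`: the overlaps
`|⟨uᵢ, vⱼ⟩|²` form a doubly stochastic matrix, which reduces everything to the scalar bound
`p - q ≤ p log p - p log q`. -/

lemma sub_le_mul_log_sub_mul_log {p q : ℝ} (hp : 0 ≤ p) (hq : 0 < q) :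
    p - q ≤ p * Real.log p - p * Real.log q := by
  rcases hp.eq_or_lt with rfl | hp
  · simpa using hq.le
  · have := Real.log_le_sub_one_of_pos (div_pos hq hp)
    rw [Real.log_div hq.ne' hp.ne'] at this
    have hqp : q / p * p = q := div_mul_cancel₀ _ hp.ne'
    nlinarith

section DoublyStochastic

variable {n : Type*} [Fintype n] [DecidableEq n]

lemma sum_mul_log_le_of_mem_doublyStochastic {c : Matrix n n ℝ} (hc : c ∈ doublyStochastic ℝ n)
    {p q : n → ℝ} (hp : ∀ i, 0 ≤ p i) (hq : ∀ j, 0 < q j) (hpq : ∑ j, q j ≤ ∑ i, p i) :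
    ∑ i, ∑ j, c i j * (p i * Real.log (q j)) ≤ ∑ i, p i * Real.log (p i) := by
  have hmix : ∑ i, ∑ j, c i j * (p i - q j) = ∑ i, p i - ∑ j, q j := by
    simp only [mul_sub, Finset.sum_sub_distrib, ← Finset.sum_mul,
      sum_row_of_mem_doublyStochastic hc]
    rw [Finset.sum_comm]
    simp [← Finset.sum_mul, sum_col_of_mem_doublyStochastic hc]
  have hlog : ∑ i, ∑ j, c i j * (p i * Real.log (p i)) = ∑ i, p i * Real.log (p i) := by
    simp [← Finset.sum_mul, sum_row_of_mem_doublyStochastic hc]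
  have hklein : ∑ i, ∑ j, c i j * (p i - q j) ≤
      ∑ i, ∑ j, c i j * (p i * Real.log (p i) - p i * Real.log (q j)) :=
    Finset.sum_le_sum fun i _ => Finset.sum_le_sum fun j _ =>
      mul_le_mul_of_nonneg_left (sub_le_mul_log_sub_mul_log (hp i) (hq j))
        (nonneg_of_mem_doublyStochastic hc)
  rw [hmix] at hklein
  simp only [mul_sub, Finset.sum_sub_distrib, hlog] at hklein
  linarith

end DoublyStochastic

noncomputable def partitionFunction {n : Type*} [Fintype n] (β : ℝ) (e : n → ℝ) : ℝ :=
  ∑ j, Real.exp (-β * e j)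

noncomputable def boltzmannWeights {n : Type*} [Fintype n] (β : ℝ) (e : n → ℝ) (i : n) : ℝ :=
  Real.exp (-β * e i) / partitionFunction β e

section BoltzmannWeights

variable {n : Type*} [Fintype n] [Nonempty n] (β : ℝ) (e : n → ℝ)

lemma partitionFunction_pos : 0 < partitionFunction β e :=
  Finset.sum_pos (fun _ _ => Real.exp_pos _) Finset.univ_nonempty

lemma boltzmannWeights_pos (i : n) : 0 < boltzmannWeights β e i :=
  div_pos (Real.exp_pos _) (partitionFunction_pos β e)

lemma sum_boltzmannWeights : ∑ i, boltzmannWeights β e i = 1 := by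
  simp only [boltzmannWeights, ← Finset.sum_div]
  exact div_self (partitionFunction_pos β e).ne'

lemma log_boltzmannWeights (i : n) :
    Real.log (boltzmannWeights β e i) = -β * e i - Real.log (partitionFunction β e) := by
  rw [boltzmannWeights, Real.log_div (Real.exp_ne_zero _) (partitionFunction_pos β e).ne',
    Real.log_exp]

end BoltzmannWeights

section Spectral

variable {n : Type*} [Fintype n] [DecidableEq n]

lemma Matrix.IsHermitian.eq_conj_diagonal {H : Matrix n n ℂ} (hH : H.IsHermitian) :
    H = (hH.eigenvectorUnitary : Matrix n n ℂ) * diagonal (fun i => (hH.eigenvalues i : ℂ))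
      * (hH.eigenvectorUnitary : Matrix n n ℂ)ᴴ := by
  conv_lhs => rw [hH.spectral_theorem]
  rfl

lemma charpoly_conj_eq_of_conjTranspose_mul_self {V : Matrix n n ℂ} (hV : Vᴴ * V = 1)
    (D : Matrix n n ℂ) : (V * D * Vᴴ).charpoly = D.charpoly := by
  rw [charpoly_mul_comm, ← mul_assoc, hV, one_mul]

lemma Matrix.IsHermitian.sum_eigenvalues_eq_of_charpoly_eq {A : Matrix n n ℂ}
    (hA : A.IsHermitian) {d : n → ℝ} (h : A.charpoly = (diagonal fun i => (d i : ℂ)).charpoly)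
    (f : ℝ → ℝ) : ∑ i, f (hA.eigenvalues i) = ∑ i, f (d i) := by
  have hroots : Finset.univ.val.map (fun i => (hA.eigenvalues i : ℂ)) =
      Finset.univ.val.map (fun i => (d i : ℂ)) := by
    have := hA.roots_charpoly_eq_eigenvalues
    rw [h, charpoly_diagonal, Polynomial.roots_prod] at this
    · simpa using this.symm
    · simp [Finset.prod_ne_zero_iff, Polynomial.X_sub_C_ne_zero]
  have := congrArg (fun m => (m.map (f ∘ Complex.re)).sum) hroots
  simp only [Multiset.map_map, Function.comp_def, Complex.ofReal_re] at this
  exact this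

lemma vnEntropy_conj_diagonal {V : Matrix n n ℂ} (hV : Vᴴ * V = 1) (d : n → ℝ) :
    vnEntropy (V * diagonal (fun i => (d i : ℂ)) * Vᴴ) = -∑ i, d i * Real.log (d i) := by
  have hA : (V * diagonal (fun i => (d i : ℂ)) * Vᴴ).IsHermitian :=
    isHermitian_mul_mul_conjTranspose V <| isHermitian_diagonal_iff.2 fun i => Complex.conj_ofReal _
  rw [vnEntropy, dif_pos hA, hA.sum_eigenvalues_eq_of_charpoly_eq
    (charpoly_conj_eq_of_conjTranspose_mul_self hV _) fun t => t * Real.log t]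

lemma vnEntropy_unitary_conj {ρ U : Matrix n n ℂ} (hρ : ρ.IsHermitian) (hU : Uᴴ * U = 1) :
    vnEntropy (U * ρ * Uᴴ) = vnEntropy ρ := by
  have hUρ : (U * ρ * Uᴴ).IsHermitian := isHermitian_mul_mul_conjTranspose U hρ
  have heig : hUρ.eigenvalues = hρ.eigenvalues :=
    (hUρ.eigenvalues_eq_eigenvalues_iff hρ).2 (charpoly_conj_eq_of_conjTranspose_mul_self hU ρ)
  rw [vnEntropy, dif_pos hUρ, heig, vnEntropy, dif_pos hρ]

lemma re_trace_conjTranspose_mul_diagonal_mul_mul_diagonal (M : Matrix n n ℂ) (p e : n → ℝ) :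
    (Mᴴ * diagonal (fun i => (p i : ℂ)) * M * diagonal (fun i => (e i : ℂ))).trace.re
      = ∑ i, ∑ j, p i * e j * Complex.normSq (M i j) := by
  rw [trace, Complex.re_sum, Finset.sum_comm]
  refine Finset.sum_congr rfl fun j _ => ?_
  rw [diag_apply, mul_diagonal, mul_apply, Finset.sum_mul, Complex.re_sum]
  refine Finset.sum_congr rfl fun i _ => ?_
  simp only [mul_diagonal, conjTranspose_apply, Complex.star_def]
  rw [mul_right_comm _ _ (M i j), ← Complex.normSq_eq_conj_mul_self]
  simp only [← Complex.ofReal_mul, Complex.ofReal_re]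
  ring

lemma re_trace_conj_diagonal_mul_conj_diagonal (W V : Matrix n n ℂ) (p e : n → ℝ) :
    (W * diagonal (fun i => (p i : ℂ)) * Wᴴ * (V * diagonal (fun i => (e i : ℂ)) * Vᴴ)).trace.re
      = ∑ i, ∑ j, p i * e j * Complex.normSq ((Wᴴ * V) i j) := by
  rw [← re_trace_conjTranspose_mul_diagonal_mul_mul_diagonal, conjTranspose_mul,
    conjTranspose_conjTranspose, ← Matrix.mul_assoc (W * _ * Wᴴ), trace_mul_comm _ Vᴴ]
  simp only [Matrix.mul_assoc]

lemma normSq_mem_doublyStochastic {U : Matrix n n ℂ} (hU : U ∈ unitaryGroup n ℂ) :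
    U.map Complex.normSq ∈ doublyStochastic ℝ n := by
  rw [mem_doublyStochastic_iff_sum]
  refine ⟨fun i j => Complex.normSq_nonneg _, fun i => ?_, fun j => ?_⟩
  · have := congrFun (congrFun (mem_unitaryGroup_iff.1 hU) i) i
    simp only [mul_apply, star_apply, one_apply_eq, Complex.star_def, Complex.mul_conj] at this
    exact_mod_cast this
  · have := congrFun (congrFun (mem_unitaryGroup_iff'.1 hU) j) j
    simp only [mul_apply, star_apply, one_apply_eq, Complex.star_def, mul_comm (starRingEnd ℂ _),
      Complex.mul_conj] at this
    exact_mod_cast this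

end Spectral

section Gibbs

variable {n : Type*} [Fintype n] [DecidableEq n]

lemma exp_unitary_conj (V : unitaryGroup n ℂ) (A : Matrix n n ℂ) :
    exp ((V : Matrix n n ℂ) * A * (V : Matrix n n ℂ)ᴴ) = V * exp A * (V : Matrix n n ℂ)ᴴ :=
  Matrix.exp_units_conj (Unitary.toUnits V) A

lemma gibbs_eq_conj_diagonal {H : Matrix n n ℂ} (hH : H.IsHermitian) (β : ℝ) :
    gibbs β H = (hH.eigenvectorUnitary : Matrix n n ℂ)
      * diagonal (fun i => (boltzmannWeights β hH.eigenvalues i : ℂ))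
      * (hH.eigenvectorUnitary : Matrix n n ℂ)ᴴ := by
  set V := hH.eigenvectorUnitary
  have hexp : exp ((-β : ℂ) • H) =
      V * diagonal (fun i => (Real.exp (-β * hH.eigenvalues i) : ℂ)) * (V : Matrix n n ℂ)ᴴ := by
    conv_lhs => rw [hH.eq_conj_diagonal]
    rw [← smul_mul_assoc, ← mul_smul_comm, ← diagonal_smul, exp_unitary_conj, exp_diagonal]
    congr
    funext i
    simp [← Complex.exp_eq_exp_ℂ, Complex.ofReal_exp]
  have htrace : (exp ((-β : ℂ) • H)).trace = partitionFunction β hH.eigenvalues := by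
    have hV : (V : Matrix n n ℂ)ᴴ * V = 1 := Unitary.coe_star_mul_self V
    rw [hexp, trace_mul_cycle, hV, one_mul, trace_diagonal,
      partitionFunction, Complex.ofReal_sum]
  rw [gibbs, htrace, hexp, ← smul_mul_assoc, ← mul_smul_comm, ← diagonal_smul]
  congr
  funext i
  simp [boltzmannWeights, div_eq_inv_mul]

lemma vnEntropy_le_mul_re_trace_add_log [Nonempty n] {σ H : Matrix n n ℂ} (hσ : σ.PosSemidef)
    (hσ1 : σ.trace = 1) (hH : H.IsHermitian) (β : ℝ) :
    vnEntropy σ ≤ β * (σ * H).trace.re + Real.log (partitionFunction β hH.eigenvalues) := by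
  set p := hσ.isHermitian.eigenvalues
  set e := hH.eigenvalues
  set W := hσ.isHermitian.eigenvectorUnitary
  set V := hH.eigenvectorUnitary
  set c := ((W : Matrix n n ℂ)ᴴ * V).map Complex.normSq
  have hc : c ∈ doublyStochastic ℝ n :=
    normSq_mem_doublyStochastic (mul_mem (Unitary.star_mem W.2) V.2)
  have hsump : ∑ i, p i = 1 := by
    have : ((∑ i, p i : ℝ) : ℂ) = 1 := by
      rw [← hσ1, hσ.isHermitian.trace_eq_sum_eigenvalues]
      push_cast
      rfl
    exact_mod_cast this
  have htr : (σ * H).trace.re = ∑ i, ∑ j, p i * e j * c i j := by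
    have := re_trace_conj_diagonal_mul_conj_diagonal W V p e
    rwa [← hσ.isHermitian.eq_conj_diagonal, ← hH.eq_conj_diagonal] at this
  have hmix : ∑ i, ∑ j, c i j * (p i * Real.log (boltzmannWeights β e j))
      = -(β * ∑ i, ∑ j, p i * e j * c i j) - Real.log (partitionFunction β e) := by
    have hterm : ∀ i j, c i j * (p i * Real.log (boltzmannWeights β e j)) =
        -(β * (p i * e j * c i j)) - Real.log (partitionFunction β e) * (p i * c i j) := by
      intro i j
      rw [log_boltzmannWeights]
      ring
    simp only [hterm, Finset.sum_sub_distrib, Finset.sum_neg_distrib, ← Finset.mul_sum,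
      sum_row_of_mem_doublyStochastic hc, mul_one, hsump]
  have hgibbs := sum_mul_log_le_of_mem_doublyStochastic hc hσ.eigenvalues_nonneg
    (boltzmannWeights_pos β e) (by rw [sum_boltzmannWeights, hsump])
  rw [vnEntropy, dif_pos hσ.isHermitian, htr]
  linarith

lemma vnEntropy_gibbs [Nonempty n] {H : Matrix n n ℂ} (hH : H.IsHermitian) (β : ℝ) :
    vnEntropy (gibbs β H) =
      β * (gibbs β H * H).trace.re + Real.log (partitionFunction β hH.eigenvalues) := by
  have hγ := gibbs_eq_conj_diagonal hH β
  set e := hH.eigenvalues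
  set q := boltzmannWeights β e
  set V := hH.eigenvectorUnitary
  have hV : (V : Matrix n n ℂ)ᴴ * V = 1 := Unitary.coe_star_mul_self V
  have htr : (gibbs β H * H).trace.re = ∑ i, q i * e i := by
    have := re_trace_conj_diagonal_mul_conj_diagonal V V q e
    rw [← hγ, ← hH.eq_conj_diagonal, hV] at this
    simpa [one_apply, apply_ite Complex.normSq] using this
  have hterm : ∀ i, -(q i * Real.log (q i)) =
      β * (q i * e i) + q i * Real.log (partitionFunction β e) := by
    intro i
    rw [log_boltzmannWeights]
    ring
  rw [htr, hγ, vnEntropy_conj_diagonal hV, ← Finset.sum_neg_distrib]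
  simp only [hterm, Finset.sum_add_distrib, ← Finset.mul_sum, ← Finset.sum_mul]
  rw [sum_boltzmannWeights, one_mul]

lemma vnEntropy_sub_vnEntropy_gibbs_le {σ H : Matrix n n ℂ} (hσ : σ.PosSemidef)
    (hσ1 : σ.trace = 1) (hH : H.IsHermitian) (β : ℝ) :
    vnEntropy σ - vnEntropy (gibbs β H) ≤ β * ((σ - gibbs β H) * H).trace.re := by
  have : Nonempty n := by
    by_contra h
    simp [not_nonempty_iff.1 h, Matrix.trace] at hσ1
  rw [vnEntropy_gibbs hH, sub_mul, trace_sub, Complex.sub_re]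
  linarith [vnEntropy_le_mul_re_trace_add_log hσ hσ1 hH β]

end Gibbs

section PartialTrace

variable {a b : ℕ}

lemma ptraceB_eq_sum_submatrix (ρ : Matrix (Fin a × Fin b) (Fin a × Fin b) ℂ) :
    ptraceB ρ = ∑ k, ρ.submatrix (·, k) (·, k) := by
  ext i j
  simp [ptraceB, Matrix.sum_apply]

lemma ptraceA_eq_sum_submatrix (ρ : Matrix (Fin a × Fin b) (Fin a × Fin b) ℂ) :
    ptraceA ρ = ∑ k, ρ.submatrix (k, ·) (k, ·) := by
  ext i j
  simp [ptraceA, Matrix.sum_apply]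

lemma Matrix.PosSemidef.ptraceB {ρ : Matrix (Fin a × Fin b) (Fin a × Fin b) ℂ}
    (hρ : ρ.PosSemidef) : (ptraceB ρ).PosSemidef := by
  rw [ptraceB_eq_sum_submatrix]
  exact posSemidef_sum _ fun k _ => hρ.submatrix _

lemma Matrix.PosSemidef.ptraceA {ρ : Matrix (Fin a × Fin b) (Fin a × Fin b) ℂ}
    (hρ : ρ.PosSemidef) : (ptraceA ρ).PosSemidef := by
  rw [ptraceA_eq_sum_submatrix]
  exact posSemidef_sum _ fun k _ => hρ.submatrix _

lemma trace_ptraceB (ρ : Matrix (Fin a × Fin b) (Fin a × Fin b) ℂ) :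
    (ptraceB ρ).trace = ρ.trace := by
  simp [trace, ptraceB, Fintype.sum_prod_type]

lemma trace_ptraceA (ρ : Matrix (Fin a × Fin b) (Fin a × Fin b) ℂ) :
    (ptraceA ρ).trace = ρ.trace := by
  simp [trace, ptraceA, Fintype.sum_prod_type, Finset.sum_comm (γ := Fin a)]

lemma trace_ptraceB_mul (ρ : Matrix (Fin a × Fin b) (Fin a × Fin b) ℂ)
    (HA : Matrix (Fin a) (Fin a) ℂ) :
    (ptraceB ρ * HA).trace = (ρ * (HA ⊗ₖ (1 : Matrix (Fin b) (Fin b) ℂ))).trace := by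
  simp only [trace, ptraceB, diag_apply, mul_apply, of_apply, Finset.sum_mul, kroneckerMap_apply,
    one_apply, mul_ite, mul_one, mul_zero, Fintype.sum_prod_type, Finset.sum_ite_eq',
    Finset.mem_univ, if_true]
  exact Finset.sum_congr rfl fun _ _ => Finset.sum_comm

lemma trace_ptraceA_mul (ρ : Matrix (Fin a × Fin b) (Fin a × Fin b) ℂ)
    (HB : Matrix (Fin b) (Fin b) ℂ) :
    (ptraceA ρ * HB).trace = (ρ * ((1 : Matrix (Fin a) (Fin a) ℂ) ⊗ₖ HB)).trace := by
  simp only [trace, ptraceA, diag_apply, mul_apply, of_apply, Finset.sum_mul, kroneckerMap_apply,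
    one_apply, ite_mul, one_mul, zero_mul, mul_ite, mul_zero, Fintype.sum_prod_type,
    Finset.sum_ite_irrel, Finset.sum_const_zero, Finset.sum_ite_eq', Finset.mem_univ, if_true]
  calc _ = ∑ i : Fin b, ∑ k : Fin a, ∑ j : Fin b, ρ (k, i) (k, j) * HB j i :=
        Finset.sum_congr rfl fun _ _ => Finset.sum_comm
    _ = _ := Finset.sum_comm

lemma trace_mul_kroneckerSum (σ : Matrix (Fin a × Fin b) (Fin a × Fin b) ℂ)
    (HA : Matrix (Fin a) (Fin a) ℂ) (HB : Matrix (Fin b) (Fin b) ℂ) :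
    (σ * (HA ⊗ₖ (1 : Matrix (Fin b) (Fin b) ℂ) + (1 : Matrix (Fin a) (Fin a) ℂ) ⊗ₖ HB)).trace
      = (ptraceB σ * HA).trace + (ptraceA σ * HB).trace := by
  rw [mul_add, trace_add, trace_ptraceB_mul, trace_ptraceA_mul]

end PartialTrace

lemma trace_conj_mul_eq_of_commute {n : Type*} [Fintype n] [DecidableEq n] {U K : Matrix n n ℂ}
    (hU : Uᴴ * U = 1) (hK : U * K = K * U) (ρ : Matrix n n ℂ) :
    (U * ρ * Uᴴ * K).trace = (ρ * K).trace := by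
  have hconj : Uᴴ * K * U = K := by rw [mul_assoc, ← hK, ← mul_assoc, hU, one_mul]
  calc (U * ρ * Uᴴ * K).trace = (U * (ρ * Uᴴ * K)).trace := by simp only [mul_assoc]
    _ = (ρ * Uᴴ * K * U).trace := trace_mul_comm _ _
    _ = (ρ * K).trace := by rw [mul_assoc ρ, mul_assoc ρ, hconj]

/-- Modified Clausius inequality: for a bipartite state with thermal
marginals evolving under an energy-conserving unitary,
`(β_A − β_B)⟨Q_A⟩ ≥ ΔI(A:B)`. -/
theorem modified_clausius
    {a b : ℕ} (HA : Matrix (Fin a) (Fin a) ℂ) (HB : Matrix (Fin b) (Fin b) ℂ)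
    (hHA : HA.IsHermitian) (hHB : HB.IsHermitian) (βA βB : ℝ)
    (ρ : Matrix (Fin a × Fin b) (Fin a × Fin b) ℂ)
    (hρ : ρ.PosSemidef) (hρ1 : ρ.trace = 1)
    (hmargA : ptraceB ρ = gibbs βA HA) (hmargB : ptraceA ρ = gibbs βB HB)
    (U : Matrix (Fin a × Fin b) (Fin a × Fin b) ℂ)
    (hU : U * Uᴴ = 1 ∧ Uᴴ * U = 1)
    (hcomm : U * (HA ⊗ₖ (1 : Matrix (Fin b) (Fin b) ℂ)
          + (1 : Matrix (Fin a) (Fin a) ℂ) ⊗ₖ HB)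
        = (HA ⊗ₖ (1 : Matrix (Fin b) (Fin b) ℂ)
          + (1 : Matrix (Fin a) (Fin a) ℂ) ⊗ₖ HB) * U)
    (ρ' : Matrix (Fin a × Fin b) (Fin a × Fin b) ℂ) (hρ' : ρ' = U * ρ * Uᴴ) :
    (βA - βB) * ((ptraceB ρ' - ptraceB ρ) * HA).trace.re
      ≥ mutualInfo ρ' - mutualInfo ρ := by
  subst hρ'
  have hρ'psd : (U * ρ * Uᴴ).PosSemidef := hρ.mul_mul_conjTranspose_same U
  have hρ'1 : (U * ρ * Uᴴ).trace = 1 := by rw [trace_mul_cycle, hU.2, one_mul, hρ1]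
  have hSA := vnEntropy_sub_vnEntropy_gibbs_le hρ'psd.ptraceB (by rw [trace_ptraceB, hρ'1]) hHA βA
  have hSB := vnEntropy_sub_vnEntropy_gibbs_le hρ'psd.ptraceA (by rw [trace_ptraceA, hρ'1]) hHB βB
  rw [← hmargA] at hSA
  rw [← hmargB] at hSB
  have hE := congrArg Complex.re (trace_conj_mul_eq_of_commute hU.2 hcomm ρ)
  simp only [trace_mul_kroneckerSum, Complex.add_re] at hE
  simp only [sub_mul, trace_sub, Complex.sub_re] at hSA hSB ⊢
  rw [mutualInfo, mutualInfo, vnEntropy_unitary_conj hρ.isHermitian hU.2]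
  linear_combination hSA + hSB + βB * hE
end

section
/- Noncontextual bound (finite ontic space, single transformation): Suppose Λ is a finite set, μ_P a probability distribution on Λ, ξ(k|λ) ∈ [0,1] response functions with Σ_k ξ(k|λ) = 1, and Γ_T, Γ_{T*}, Γ', Γ_C stochastic matrices on Λ satisfying α Γ_T + (1-α) Γ_{T*} = (1-p_d) δ + p_d Γ_C entrywise, where δ is the identity matrix, 0 < α ≤ 1, 0 ≤ p_d ≤ 1. Then for any positive values a_k with a_max = max_k a_k, the quantity ⟨ΔA⟩ = Σ_k a_k (Σ_{λ,λ'} μ_P(λ)Γ_T(λ'|λ)ξ(k|λ') - Σ_λ μ_P(λ)ξ(k|λ)) satisfies -a_max p_d/α² ≤ ⟨ΔA⟩ ≤ p_d a_max/α. -/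
open Finset

/-- Triple sums of `μ·Γ·ξ` over all of `k, l, l'` equal 1. -/
lemma triple_sum_eq_one {Λ K : Type*} [Fintype Λ] [Fintype K]
    (μ : Λ → ℝ) (Γ : Λ → Λ → ℝ) (ξ : K → Λ → ℝ)
    (hμ1 : ∑ l, μ l = 1) (hΓ : ∀ l, ∑ l', Γ l' l = 1) (hξsum : ∀ l, ∑ k, ξ k l = 1) :
    ∑ k, ∑ l, ∑ l', μ l * Γ l' l * ξ k l' = 1 := by
  rw [Finset.sum_comm]
  have h : ∀ l, ∑ k, ∑ l', μ l * Γ l' l * ξ k l' = μ l := by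
    intro l
    rw [Finset.sum_comm]
    calc ∑ l', ∑ k, μ l * Γ l' l * ξ k l'
        = ∑ l', μ l * Γ l' l * ∑ k, ξ k l' := by
          refine Finset.sum_congr rfl fun l' _ => ?_
          rw [Finset.mul_sum]
      _ = ∑ l', μ l * Γ l' l := by simp [hξsum]
      _ = μ l := by rw [← Finset.mul_sum, hΓ l, mul_one]
  simp only [h]
  exact hμ1

/-- Abstract bound: if `0 < a k ≤ aM`, `0 ≤ c k`, `d k ≤ c k` and `∑ d = 0`, then
`∑ a k * d k` lies in `[-aM * ∑ c, aM * ∑ c]`. -/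
lemma abstract_bound {K : Type*} [Fintype K] (a c d : K → ℝ) (aM : ℝ)
    (ha : ∀ k, 0 < a k) (haM : ∀ k, a k ≤ aM)
    (hc : ∀ k, 0 ≤ c k) (hdc : ∀ k, d k ≤ c k) (hd0 : ∑ k, d k = 0) :
    -(aM * ∑ k, c k) ≤ ∑ k, a k * d k ∧ ∑ k, a k * d k ≤ aM * ∑ k, c k := by
  constructor
  · have hpt : ∀ k ∈ Finset.univ (α := K),
        aM * d k - aM * c k + a k * c k ≤ a k * d k := by
      intro k _
      nlinarith [hdc k, haM k, hc k, (ha k).le]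
    have hsum := Finset.sum_le_sum hpt
    have hac : 0 ≤ ∑ k, a k * c k :=
      Finset.sum_nonneg fun k _ => mul_nonneg (ha k).le (hc k)
    have hexp : ∑ k, (aM * d k - aM * c k + a k * c k)
        = aM * (∑ k, d k) - aM * (∑ k, c k) + ∑ k, a k * c k := by
      rw [Finset.sum_add_distrib, Finset.sum_sub_distrib, ← Finset.mul_sum, ← Finset.mul_sum]
    rw [hexp, hd0] at hsum
    linarith
  · have hpt : ∀ k ∈ Finset.univ (α := K), a k * d k ≤ aM * c k := by
      intro k _
      calc a k * d k ≤ a k * c k := mul_le_mul_of_nonneg_left (hdc k) (ha k).le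
        _ ≤ aM * c k := mul_le_mul_of_nonneg_right (haM k) (hc k)
    calc ∑ k, a k * d k ≤ ∑ k, aM * c k := Finset.sum_le_sum hpt
      _ = aM * ∑ k, c k := by rw [Finset.mul_sum]

/-- Noncontextual bound for a single transformation on a finite ontic
space: if `α Γ_T + (1-α) Γ_{T*} = (1-p_d) δ + p_d Γ_C` entrywise, then the average change
of any positive-valued observable lies in `[-a_max p_d/α², p_d a_max/α]`. -/
theorem noncontextual_bound_single
    {Λ K : Type*} [Fintype Λ] [Fintype K] [DecidableEq Λ]
    (μ : Λ → ℝ) (hμ0 : ∀ l, 0 ≤ μ l) (hμ1 : ∑ l, μ l = 1)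
    (ξ : K → Λ → ℝ) (hξ0 : ∀ k l, 0 ≤ ξ k l) (hξ1 : ∀ k l, ξ k l ≤ 1)
    (hξsum : ∀ l, ∑ k, ξ k l = 1)
    (ΓT ΓTs ΓC : Λ → Λ → ℝ)
    (hΓT : (∀ l' l, 0 ≤ ΓT l' l) ∧ ∀ l, ∑ l', ΓT l' l = 1)
    (hΓTs : (∀ l' l, 0 ≤ ΓTs l' l) ∧ ∀ l, ∑ l', ΓTs l' l = 1)
    (hΓC : (∀ l' l, 0 ≤ ΓC l' l) ∧ ∀ l, ∑ l', ΓC l' l = 1)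
    (α pd : ℝ) (hα : 0 < α) (hα1 : α ≤ 1) (hpd0 : 0 ≤ pd) (hpd1 : pd ≤ 1)
    (heq : ∀ l' l, α * ΓT l' l + (1 - α) * ΓTs l' l
        = (1 - pd) * (if l' = l then 1 else 0) + pd * ΓC l' l)
    (a : K → ℝ) (ha : ∀ k, 0 < a k) (aM : ℝ) (haM : IsGreatest (Set.range a) aM) :
    -(aM * pd) / α ^ 2
        ≤ ∑ k, a k * ((∑ l, ∑ l', μ l * ΓT l' l * ξ k l') - ∑ l, μ l * ξ k l)
      ∧ ∑ k, a k * ((∑ l, ∑ l', μ l * ΓT l' l * ξ k l') - ∑ l, μ l * ξ k l)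
        ≤ pd * aM / α := by
  -- notation
  set S : K → ℝ := fun k => ∑ l, μ l * ξ k l with hS
  set T : K → ℝ := fun k => ∑ l, ∑ l', μ l * ΓT l' l * ξ k l' with hT
  set Ts : K → ℝ := fun k => ∑ l, ∑ l', μ l * ΓTs l' l * ξ k l' with hTs
  set C : K → ℝ := fun k => ∑ l, ∑ l', μ l * ΓC l' l * ξ k l' with hC
  have haMub : ∀ k, a k ≤ aM := fun k => haM.2 ⟨k, rfl⟩
  obtain ⟨k0, hk0⟩ := haM.1
  have haMpos : 0 < aM := hk0 ▸ ha k0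
  -- linear identity per k
  have hlin : ∀ k, α * T k + (1 - α) * Ts k = (1 - pd) * S k + pd * C k := by
    intro k
    have key : ∑ l, ∑ l', (α * ΓT l' l + (1 - α) * ΓTs l' l) * (μ l * ξ k l')
        = ∑ l, ∑ l', ((1 - pd) * (if l' = l then 1 else 0) + pd * ΓC l' l) * (μ l * ξ k l') := by
      refine Finset.sum_congr rfl fun l _ => Finset.sum_congr rfl fun l' _ => ?_
      rw [heq]
    have lhs : ∑ l, ∑ l', (α * ΓT l' l + (1 - α) * ΓTs l' l) * (μ l * ξ k l')
        = α * T k + (1 - α) * Ts k := by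
      simp only [hT, hTs, Finset.mul_sum, ← Finset.sum_add_distrib]
      refine Finset.sum_congr rfl fun l _ => Finset.sum_congr rfl fun l' _ => ?_
      ring
    have rhs : ∑ l, ∑ l', ((1 - pd) * (if l' = l then 1 else 0) + pd * ΓC l' l) * (μ l * ξ k l')
        = (1 - pd) * S k + pd * C k := by
      have h1 : ∀ l : Λ, ∑ l', ((1 - pd) * (if l' = l then 1 else 0) + pd * ΓC l' l) * (μ l * ξ k l')
          = (1 - pd) * (μ l * ξ k l) + ∑ l', pd * ΓC l' l * (μ l * ξ k l') := by
        intro l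
        have hsplit : ∀ l' : Λ,
            (((1 - pd) * if l' = l then 1 else 0) + pd * ΓC l' l) * (μ l * ξ k l')
            = ((1 - pd) * if l' = l then 1 else 0) * (μ l * ξ k l')
              + pd * ΓC l' l * (μ l * ξ k l') := fun l' => by ring
        simp only [hsplit]
        rw [Finset.sum_add_distrib]
        congr 1
        simp [ite_mul, mul_ite, Finset.sum_ite_eq']
      simp only [h1, Finset.sum_add_distrib]
      congr 1
      · rw [hS, Finset.mul_sum]
      · rw [hC, Finset.mul_sum]
        refine Finset.sum_congr rfl fun l _ => ?_
        rw [Finset.mul_sum]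
        refine Finset.sum_congr rfl fun l' _ => ?_
        ring
    rw [← lhs, key, rhs]
  -- diagonal bound
  have hdiag : ∀ l, 1 - α - pd ≤ (1 - α) * ΓTs l l := by
    intro l
    have h1 := heq l l
    simp only [eq_self_iff_true, if_true, mul_one] at h1
    have hTle : ΓT l l ≤ 1 := by
      have := Finset.single_le_sum (f := fun l' => ΓT l' l)
        (fun l' _ => hΓT.1 l' l) (Finset.mem_univ l)
      rw [hΓT.2 l] at this; exact this
    nlinarith [hΓC.1 l l, mul_le_mul_of_nonneg_left hTle hα.le]
  -- (1-α-pd) S k ≤ (1-α) Ts k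
  have hSTs : ∀ k, (1 - α - pd) * S k ≤ (1 - α) * Ts k := by
    intro k
    rw [hS, hTs, Finset.mul_sum, Finset.mul_sum]
    refine Finset.sum_le_sum fun l _ => ?_
    calc (1 - α - pd) * (μ l * ξ k l)
        ≤ (1 - α) * ΓTs l l * (μ l * ξ k l) :=
          mul_le_mul_of_nonneg_right (hdiag l) (mul_nonneg (hμ0 l) (hξ0 k l))
      _ = (1 - α) * (μ l * ΓTs l l * ξ k l) := by ring
      _ ≤ (1 - α) * ∑ l', μ l * ΓTs l' l * ξ k l' := by
          refine mul_le_mul_of_nonneg_left ?_ (by linarith)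
          exact Finset.single_le_sum (f := fun l' => μ l * ΓTs l' l * ξ k l')
            (fun l' _ => mul_nonneg (mul_nonneg (hμ0 l) (hΓTs.1 l' l)) (hξ0 k l'))
            (Finset.mem_univ l)
  -- key pointwise bound
  have hkey : ∀ k, T k - S k ≤ pd / α * C k := by
    intro k
    have h1 : α * (T k - S k) ≤ pd * C k := by
      have := hlin k
      have := hSTs k
      nlinarith
    rw [div_mul_eq_mul_div, le_div_iff₀ hα]
    nlinarith
  -- sum facts
  have hTsum : ∑ k, T k = 1 := triple_sum_eq_one μ ΓT ξ hμ1 hΓT.2 hξsum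
  have hCsum : ∑ k, C k = 1 := triple_sum_eq_one μ ΓC ξ hμ1 hΓC.2 hξsum
  have hSsum : ∑ k, S k = 1 := by
    rw [hS, Finset.sum_comm]
    have h : ∀ l, ∑ k, μ l * ξ k l = μ l := by
      intro l
      rw [← Finset.mul_sum, hξsum l, mul_one]
    simp only [h]
    exact hμ1
  have hd0 : ∑ k, (T k - S k) = 0 := by
    rw [Finset.sum_sub_distrib, hTsum, hSsum]; ring
  have hc0 : ∀ k, 0 ≤ pd / α * C k := by
    intro k
    refine mul_nonneg (div_nonneg hpd0 hα.le) ?_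
    exact Finset.sum_nonneg fun l _ => Finset.sum_nonneg fun l' _ =>
      mul_nonneg (mul_nonneg (hμ0 l) (hΓC.1 l' l)) (hξ0 k l')
  have hcsum : ∑ k, pd / α * C k = pd / α := by
    rw [← Finset.mul_sum, hCsum, mul_one]
  have hmain := abstract_bound a (fun k => pd / α * C k) (fun k => T k - S k) aM
    ha haMub hc0 hkey hd0
  rw [hcsum] at hmain
  obtain ⟨hlo, hhi⟩ := hmain
  constructor
  · have hα2 : α ^ 2 ≤ α := by nlinarith
    have h2 : aM * pd / α ≤ aM * pd / α ^ 2 :=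
      div_le_div_of_nonneg_left (mul_nonneg haMpos.le hpd0) (pow_pos hα 2) hα2
    have h1 : -(aM * pd) / α ^ 2 ≤ -(aM * (pd / α)) := by
      have e1 : -(aM * pd) / α ^ 2 = -(aM * pd / α ^ 2) := by ring
      have e2 : -(aM * (pd / α)) = -(aM * pd / α) := by ring
      rw [e1, e2]
      linarith
    exact h1.trans hlo
  · calc ∑ k, a k * (T k - S k) ≤ aM * (pd / α) := hhi
      _ = pd * aM / α := by ring
end

section
/- Noncontextual bound for sequential transformations (finite ontic space): Let Λ be finite, and let Γ_T, Γ_{A1}, Γ_{T2}, Γ_{T2*}, Γ_{A2}, Γ_{C2} be stochastic matrices on Λ satisfying (1/2)Γ_T + (1/2)Γ_{A1} = (1-p_{d1})Γ_{T2} + p_{d1}Γ_{A2} and (1/2)Γ_{T2} + (1/2)Γ_{T2*} = (1-p_{d2})δ + p_{d2}Γ_{C2} entrywise, with 0 ≤ p_{d1}, p_{d2} ≤ 1. Then for any distribution μ_P on Λ, response functions ξ(k|λ) ∈ [0,1] with Σ_k ξ(k|λ) = 1, and positive values a_k with maximum a_max, the average ⟨ΔA⟩ = Σ_k a_k(Σ_{λ,λ'}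 μ_P(λ)Γ_T(λ'|λ)ξ(k|λ') - Σ_λ μ_P(λ)ξ(k|λ)) satisfies -4 a_max (p_{d1}+3p_{d2}-3p_{d1}p_{d2}) ≤ ⟨ΔA⟩ ≤ 2 a_max (p_{d1}+2p_{d2}-2p_{d1}p_{d2}). -/
open Finset

/-- Noncontextual bound for sequential transformations on a finite ontic
space: if `(1/2)Γ_T + (1/2)Γ_{A1} = (1-p_{d1})Γ_{T2} + p_{d1}Γ_{A2}` and
`(1/2)Γ_{T2} + (1/2)Γ_{T2*} = (1-p_{d2})δ + p_{d2}Γ_{C2}` entrywise, then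
`-4 a_max(p_{d1}+3p_{d2}-3p_{d1}p_{d2}) ≤ ⟨ΔA⟩ ≤ 2 a_max(p_{d1}+2p_{d2}-2p_{d1}p_{d2})`. -/
theorem noncontextual_bound_sequential
    {Λ K : Type*} [Fintype Λ] [Fintype K] [DecidableEq Λ]
    (μ : Λ → ℝ) (hμ0 : ∀ l, 0 ≤ μ l) (hμ1 : ∑ l, μ l = 1)
    (ξ : K → Λ → ℝ) (hξ0 : ∀ k l, 0 ≤ ξ k l) (hξ1 : ∀ k l, ξ k l ≤ 1)
    (hξsum : ∀ l, ∑ k, ξ k l = 1)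
    (ΓT ΓA1 ΓT2 ΓT2s ΓA2 ΓC2 : Λ → Λ → ℝ)
    (hΓT : (∀ l' l, 0 ≤ ΓT l' l) ∧ ∀ l, ∑ l', ΓT l' l = 1)
    (hΓA1 : (∀ l' l, 0 ≤ ΓA1 l' l) ∧ ∀ l, ∑ l', ΓA1 l' l = 1)
    (hΓT2 : (∀ l' l, 0 ≤ ΓT2 l' l) ∧ ∀ l, ∑ l', ΓT2 l' l = 1)
    (hΓT2s : (∀ l' l, 0 ≤ ΓT2s l' l) ∧ ∀ l, ∑ l', ΓT2s l' l = 1)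
    (hΓA2 : (∀ l' l, 0 ≤ ΓA2 l' l) ∧ ∀ l, ∑ l', ΓA2 l' l = 1)
    (hΓC2 : (∀ l' l, 0 ≤ ΓC2 l' l) ∧ ∀ l, ∑ l', ΓC2 l' l = 1)
    (pd1 pd2 : ℝ) (hpd1 : 0 ≤ pd1 ∧ pd1 ≤ 1) (hpd2 : 0 ≤ pd2 ∧ pd2 ≤ 1)
    (heq1 : ∀ l' l, (1 / 2) * ΓT l' l + (1 / 2) * ΓA1 l' l
        = (1 - pd1) * ΓT2 l' l + pd1 * ΓA2 l' l)
    (heq2 : ∀ l' l, (1 / 2) * ΓT2 l' l + (1 / 2) * ΓT2s l' l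
        = (1 - pd2) * (if l' = l then 1 else 0) + pd2 * ΓC2 l' l)
    (a : K → ℝ) (ha : ∀ k, 0 < a k) (aM : ℝ) (haM : IsGreatest (Set.range a) aM) :
    -(4 * aM * (pd1 + 3 * pd2 - 3 * pd1 * pd2))
        ≤ ∑ k, a k * ((∑ l, ∑ l', μ l * ΓT l' l * ξ k l') - ∑ l, μ l * ξ k l)
      ∧ ∑ k, a k * ((∑ l, ∑ l', μ l * ΓT l' l * ξ k l') - ∑ l, μ l * ξ k l)
        ≤ 2 * aM * (pd1 + 2 * pd2 - 2 * pd1 * pd2) := by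
  obtain ⟨hpd1a, hpd1b⟩ := hpd1
  obtain ⟨hpd2a, hpd2b⟩ := hpd2
  have hak : ∀ k, a k ≤ aM := fun k => haM.2 (Set.mem_range_self k)
  have haM0 : 0 ≤ aM := by
    obtain ⟨k0, hk0⟩ := haM.1
    exact hk0 ▸ (ha k0).le
  -- the "observable" averaged response
  set A : Λ → ℝ := fun l => ∑ k, a k * ξ k l with hAdef
  have hA0 : ∀ l, 0 ≤ A l := fun l =>
    Finset.sum_nonneg fun k _ => mul_nonneg (ha k).le (hξ0 k l)
  have hA1 : ∀ l, A l ≤ aM := by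
    intro l
    calc A l ≤ ∑ k, aM * ξ k l :=
          Finset.sum_le_sum fun k _ => mul_le_mul_of_nonneg_right (hak k) (hξ0 k l)
      _ = aM := by rw [← Finset.mul_sum, hξsum l, mul_one]
  set q : ℝ := 2 * pd1 + 4 * pd2 * (1 - pd1) with hqdef
  -- pointwise off-diagonal bound on ΓT
  have hpt : ∀ l l' : Λ, l' ≠ l →
      ΓT l' l ≤ 4 * (1 - pd1) * pd2 * ΓC2 l' l + 2 * pd1 * ΓA2 l' l := by
    intro l l' hne
    have h2 := heq2 l' l
    rw [if_neg hne] at h2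
    have hT2 : ΓT2 l' l ≤ 2 * pd2 * ΓC2 l' l := by
      have := hΓT2s.1 l' l; linarith
    have h1 := heq1 l' l
    have hT : ΓT l' l ≤ 2 * (1 - pd1) * ΓT2 l' l + 2 * pd1 * ΓA2 l' l := by
      have := hΓA1.1 l' l; linarith
    nlinarith [mul_le_mul_of_nonneg_left hT2 (by linarith : (0:ℝ) ≤ 2 * (1 - pd1))]
  -- off-diagonal column mass bound
  have hcol : ∀ l : Λ, ∑ l' ∈ Finset.univ.erase l, ΓT l' l ≤ q := by
    intro l
    have hC : ∑ l' ∈ Finset.univ.erase l, ΓC2 l' l ≤ 1 := by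
      rw [← hΓC2.2 l]
      exact Finset.sum_le_sum_of_subset_of_nonneg (Finset.subset_univ _)
        (fun i _ _ => hΓC2.1 i l)
    have hA2c : ∑ l' ∈ Finset.univ.erase l, ΓA2 l' l ≤ 1 := by
      rw [← hΓA2.2 l]
      exact Finset.sum_le_sum_of_subset_of_nonneg (Finset.subset_univ _)
        (fun i _ _ => hΓA2.1 i l)
    calc ∑ l' ∈ Finset.univ.erase l, ΓT l' l
        ≤ ∑ l' ∈ Finset.univ.erase l,
            (4 * (1 - pd1) * pd2 * ΓC2 l' l + 2 * pd1 * ΓA2 l' l) :=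
          Finset.sum_le_sum fun l' hl' => hpt l l' (Finset.ne_of_mem_erase hl')
      _ = 4 * (1 - pd1) * pd2 * (∑ l' ∈ Finset.univ.erase l, ΓC2 l' l)
            + 2 * pd1 * (∑ l' ∈ Finset.univ.erase l, ΓA2 l' l) := by
          rw [Finset.sum_add_distrib, Finset.mul_sum, Finset.mul_sum]
      _ ≤ 4 * (1 - pd1) * pd2 * 1 + 2 * pd1 * 1 :=
          add_le_add (mul_le_mul_of_nonneg_left hC (by nlinarith))
            (mul_le_mul_of_nonneg_left hA2c (by linarith))
      _ = q := by rw [hqdef]; ring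
  have hcol0 : ∀ l : Λ, 0 ≤ ∑ l' ∈ Finset.univ.erase l, ΓT l' l := fun l =>
    Finset.sum_nonneg fun l' _ => hΓT.1 l' l
  -- rewrite the quantity of interest
  have key : (∑ k, a k * ((∑ l, ∑ l', μ l * ΓT l' l * ξ k l') - ∑ l, μ l * ξ k l))
      = ∑ l, μ l * ∑ l' ∈ Finset.univ.erase l, ΓT l' l * (A l' - A l) := by
    have hT1 : (∑ k, a k * ∑ l, ∑ l', μ l * ΓT l' l * ξ k l')
        = ∑ l, ∑ l', μ l * ΓT l' l * A l' := by
      simp only [Finset.mul_sum]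
      rw [Finset.sum_comm]
      refine Finset.sum_congr rfl fun l _ => ?_
      rw [Finset.sum_comm]
      refine Finset.sum_congr rfl fun l' _ => ?_
      rw [hAdef]
      simp only [Finset.mul_sum]
      exact Finset.sum_congr rfl fun k _ => by ring
    have hT2 : (∑ k, a k * ∑ l, μ l * ξ k l) = ∑ l, μ l * A l := by
      simp only [Finset.mul_sum]
      rw [Finset.sum_comm]
      refine Finset.sum_congr rfl fun l _ => ?_
      rw [hAdef]
      simp only [Finset.mul_sum]
      exact Finset.sum_congr rfl fun k _ => by ring
    have hstep : (∑ k, a k * ((∑ l, ∑ l', μ l * ΓT l' l * ξ k l') - ∑ l, μ l * ξ k l))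
        = (∑ l, ∑ l', μ l * ΓT l' l * A l') - ∑ l, μ l * A l := by
      simp only [mul_sub, Finset.sum_sub_distrib]
      rw [hT1, hT2]
    rw [hstep]
    rw [← Finset.sum_sub_distrib]
    refine Finset.sum_congr rfl fun l _ => ?_
    have hdiag : ∑ l', μ l * ΓT l' l * A l'
        = μ l * ΓT l l * A l + ∑ l' ∈ Finset.univ.erase l, μ l * ΓT l' l * A l' := by
      exact (Finset.add_sum_erase _ _ (Finset.mem_univ l)).symm
    have hμA : μ l * A l = μ l * ΓT l l * A l
        + ∑ l' ∈ Finset.univ.erase l, μ l * ΓT l' l * A l := by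
      have : (1:ℝ) = ΓT l l + ∑ l' ∈ Finset.univ.erase l, ΓT l' l := by
        rw [← hΓT.2 l]
        exact (Finset.add_sum_erase _ _ (Finset.mem_univ l)).symm
      calc μ l * A l = (ΓT l l + ∑ l' ∈ Finset.univ.erase l, ΓT l' l) * (μ l * A l) := by
            rw [← this, one_mul]
        _ = μ l * ΓT l l * A l
            + ∑ l' ∈ Finset.univ.erase l, μ l * ΓT l' l * A l := by
            rw [add_mul, Finset.sum_mul]
            congr 1
            · ring
            · exact Finset.sum_congr rfl fun l' _ => by ring
    rw [hdiag, hμA, add_sub_add_left_eq_sub, ← Finset.sum_sub_distrib, Finset.mul_sum]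
    exact Finset.sum_congr rfl fun l' _ => by ring
  rw [key]
  -- per-column bounds on the inner sum
  have hinner_ub : ∀ l : Λ, (∑ l' ∈ Finset.univ.erase l, ΓT l' l * (A l' - A l)) ≤ q * aM := by
    intro l
    calc (∑ l' ∈ Finset.univ.erase l, ΓT l' l * (A l' - A l))
        ≤ ∑ l' ∈ Finset.univ.erase l, ΓT l' l * aM :=
          Finset.sum_le_sum fun l' _ =>
            mul_le_mul_of_nonneg_left (by have := hA1 l'; have := hA0 l; linarith)
              (hΓT.1 l' l)
      _ = (∑ l' ∈ Finset.univ.erase l, ΓT l' l) * aM := by rw [Finset.sum_mul]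
      _ ≤ q * aM := mul_le_mul_of_nonneg_right (hcol l) haM0
  have hinner_lb : ∀ l : Λ, -(q * aM) ≤ ∑ l' ∈ Finset.univ.erase l, ΓT l' l * (A l' - A l) := by
    intro l
    have : ∑ l' ∈ Finset.univ.erase l, ΓT l' l * (-aM)
        ≤ ∑ l' ∈ Finset.univ.erase l, ΓT l' l * (A l' - A l) :=
      Finset.sum_le_sum fun l' _ =>
        mul_le_mul_of_nonneg_left (by have := hA1 l; have := hA0 l'; linarith) (hΓT.1 l' l)
    have h2 : ∑ l' ∈ Finset.univ.erase l, ΓT l' l * (-aM)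
        = -((∑ l' ∈ Finset.univ.erase l, ΓT l' l) * aM) := by
      simp [Finset.sum_mul, mul_neg, sub_mul]
      try ring
    have h3 : -(q * aM) ≤ -((∑ l' ∈ Finset.univ.erase l, ΓT l' l) * aM) := by
      have := mul_le_mul_of_nonneg_right (hcol l) haM0; linarith
    linarith [h2 ▸ this]
  -- combine
  have hub : (∑ l, μ l * ∑ l' ∈ Finset.univ.erase l, ΓT l' l * (A l' - A l)) ≤ q * aM := by
    calc (∑ l, μ l * ∑ l' ∈ Finset.univ.erase l, ΓT l' l * (A l' - A l))
        ≤ ∑ l, μ l * (q * aM) :=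
          Finset.sum_le_sum fun l _ => mul_le_mul_of_nonneg_left (hinner_ub l) (hμ0 l)
      _ = q * aM := by rw [← Finset.sum_mul, hμ1, one_mul]
  have hlb : -(q * aM) ≤ ∑ l, μ l * ∑ l' ∈ Finset.univ.erase l, ΓT l' l * (A l' - A l) := by
    calc -(q * aM) = ∑ l, μ l * (-(q * aM)) := by rw [← Finset.sum_mul, hμ1, one_mul]
      _ ≤ ∑ l, μ l * ∑ l' ∈ Finset.univ.erase l, ΓT l' l * (A l' - A l) :=
          Finset.sum_le_sum fun l _ => mul_le_mul_of_nonneg_left (hinner_lb l) (hμ0 l)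
  constructor
  · have : -(4 * aM * (pd1 + 3 * pd2 - 3 * pd1 * pd2)) ≤ -(q * aM) := by
      rw [hqdef]
      nlinarith [mul_nonneg haM0 hpd1a,
        mul_nonneg (mul_nonneg haM0 hpd2a) (by linarith : (0:ℝ) ≤ 1 - pd1)]
    linarith
  · have : q * aM ≤ 2 * aM * (pd1 + 2 * pd2 - 2 * pd1 * pd2) := by
      rw [hqdef]; nlinarith
    linarith
end

section
/- Resonant two-qubit heat formula: for the initial density matrix ρ with entries p_{00},p_{01},p_{10},p_{11} on the diagonal and coherence η e^{iξ} in the |01⟩,|10⟩ block, evolving under U(t) = exp(-it H_I) with H_I = g(a(|01⟩⟨01|+|10⟩⟨10|) + e^{iθ}|01⟩⟨10| + e^{-iθ}|10⟩⟨01|), the average heat into qubit A with local Hamiltonian H_A = (ω/2)(1-σ_z) is ⟨Q_A⟩ = ω[(p_{01}-p_{10})sin²(gt) + η sin(2gt) sin(ξ-θ)]. -/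
open Matrix ComplexOrder Kronecker NormedSpace

/-- The Pauli `Z` matrix. -/
def σz : Matrix (Fin 2) (Fin 2) ℂ := Matrix.diagonal ![1, -1]

/-- The Zeeman Hamiltonian `(ω/2)(1 - σ_z)`. -/
noncomputable def zeeman (ω : ℝ) : Matrix (Fin 2) (Fin 2) ℂ :=
  ((ω / 2 : ℝ) : ℂ) • ((1 : Matrix (Fin 2) (Fin 2) ℂ) - σz)

/-- The matrix unit `|p⟩⟨q|` on the two-qubit space. -/
def E (p q : Fin 2 × Fin 2) : Matrix (Fin 2 × Fin 2) (Fin 2 × Fin 2) ℂ :=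
  Matrix.single p q 1

/-- The general energy-conserving resonant two-qubit interaction Hamiltonian
`g(a(|01⟩⟨01|+|10⟩⟨10|) + e^{iθ}|01⟩⟨10| + e^{-iθ}|10⟩⟨01|)`. -/
noncomputable def HIres (g a θ : ℝ) : Matrix (Fin 2 × Fin 2) (Fin 2 × Fin 2) ℂ :=
  (g : ℂ) • ((a : ℂ) • (E (0, 1) (0, 1) + E (1, 0) (1, 0))
    + Complex.exp (θ * Complex.I) • E (0, 1) (1, 0)
    + Complex.exp (-θ * Complex.I) • E (1, 0) (0, 1))

/-!
The exchange operator `K = e^{iθ}|01⟩⟨10| + e^{-iθ}|10⟩⟨01|` squares to the projector `P` onto the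
single-excitation subspace, so `K³ = K` and `(P ± K)/2` are orthogonal idempotents. Since
`H_I = g(aK² + K)` is a combination of them, its exponential is read off spectrally:
`U(t) = 1 - P + e^{-igat}(cos(gt) P - i sin(gt) K)`. The phase `e^{-igat}` cancels in
`U† (H_A ⊗ 1) U`, and the heat is a short entrywise computation in which only the populations
`p₀₁, p₁₀` and the coherence `η e^{iξ}` survive.
-/

section OrthogonalIdempotents

variable {𝕂 𝔸 I : Type*} [RCLike 𝕂] [Ring 𝔸] [Algebra 𝕂 𝔸] [TopologicalSpace 𝔸]
  [IsTopologicalRing 𝔸] [ContinuousSMul 𝕂 𝔸] [T2Space 𝔸] [Fintype I] {e : I → 𝔸}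

theorem CompleteOrthogonalIdempotents.exp_sum_smul (he : CompleteOrthogonalIdempotents e)
    (z : I → 𝕂) : exp (∑ i, z i • e i) = ∑ i, exp (z i) • e i := by
  classical
  have hpow (n : ℕ) : (∑ i, z i • e i) ^ n = ∑ i, z i ^ n • e i := by
    induction n with
    | zero => simpa using he.complete.symm
    | succ n ih =>
      simp [pow_succ, ih, Finset.sum_mul, Finset.mul_sum, he.mul_eq, smul_smul, mul_comm]
  have hsum : HasSum (fun n ↦ (n.factorial : 𝕂)⁻¹ • (∑ i, z i • e i) ^ n)
      (∑ i, exp (z i) • e i) := by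
    simp_rw [hpow, Finset.smul_sum, smul_smul]
    exact hasSum_sum fun i _ ↦ (exp_series_hasSum_exp' (𝕂 := 𝕂) (𝔸 := 𝕂) (z i)).smul_const (e i)
  rw [exp_eq_tsum 𝕂]
  exact hsum.tsum_eq

theorem OrthogonalIdempotents.exp_sum_smul (he : OrthogonalIdempotents e) (z : I → 𝕂) :
    exp (∑ i, z i • e i) = 1 - ∑ i, e i + ∑ i, exp (z i) • e i := by
  simpa [Fintype.sum_option] using
    (CompleteOrthogonalIdempotents.option he).exp_sum_smul (Option.elim · 0 z)

end OrthogonalIdempotents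

theorem orthogonalIdempotents_of_pow_three_eq_self {𝕜 R : Type*} [Field 𝕜] [CharZero 𝕜]
    [Ring R] [Algebra 𝕜 R] {K : R} (hK : K ^ 3 = K) :
    OrthogonalIdempotents ![(2⁻¹ : 𝕜) • (K ^ 2 + K), (2⁻¹ : 𝕜) • (K ^ 2 - K)] := by
  have h2 : K * K = K ^ 2 := (sq K).symm
  have h3 : K ^ 2 * K = K := (pow_succ K 2).symm.trans hK
  have h3' : K * K ^ 2 = K := (pow_succ' K 2).symm.trans hK
  have h4 : K ^ 2 * K ^ 2 = K ^ 2 := by rw [← pow_add, pow_succ, hK, sq]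
  refine OrthogonalIdempotents.iff_mul_eq.2 fun i j ↦ ?_
  fin_cases i <;> fin_cases j <;>
    simp only [Fin.zero_eta, Fin.mk_one, Matrix.cons_val_zero, Matrix.cons_val_one,
      smul_mul_smul_comm, add_mul, mul_add, sub_mul, mul_sub, h2, h3, h3', h4, zero_ne_one,
      one_ne_zero, ↓reduceIte] <;>
    module

theorem exp_smul_sq_add_smul_of_pow_three_eq_self {𝔸 : Type*} [Ring 𝔸] [Algebra ℂ 𝔸]
    [TopologicalSpace 𝔸] [IsTopologicalRing 𝔸] [ContinuousSMul ℂ 𝔸] [T2Space 𝔸]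
    {K : 𝔸} (hK : K ^ 3 = K) (x y : ℂ) :
    exp (x • K ^ 2 + y • K)
      = 1 - K ^ 2 + Complex.exp x • (Complex.cosh y • K ^ 2 + Complex.sinh y • K) := by
  have h := (orthogonalIdempotents_of_pow_three_eq_self (𝕜 := ℂ) hK).exp_sum_smul ![x + y, x - y]
  simp only [Fin.sum_univ_two, Matrix.cons_val_zero, Matrix.cons_val_one,
    ← Complex.exp_eq_exp_ℂ] at h
  convert h using 1
  · congr 1; module
  · rw [Complex.cosh, Complex.sinh, Complex.exp_add, Complex.exp_sub, Complex.exp_neg]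
    module

def singleExcitationProj : Matrix (Fin 2 × Fin 2) (Fin 2 × Fin 2) ℂ :=
  E (0, 1) (0, 1) + E (1, 0) (1, 0)

noncomputable def exchange (θ : ℝ) : Matrix (Fin 2 × Fin 2) (Fin 2 × Fin 2) ℂ :=
  Complex.exp (θ * Complex.I) • E (0, 1) (1, 0) + Complex.exp (-θ * Complex.I) • E (1, 0) (0, 1)

lemma exchange_sq (θ : ℝ) : exchange θ ^ 2 = singleExcitationProj := by
  simp [sq, exchange, singleExcitationProj, E, add_mul, mul_add, ← Complex.exp_add, add_comm]

lemma singleExcitationProj_mul_exchange (θ : ℝ) :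
    singleExcitationProj * exchange θ = exchange θ := by
  simp [exchange, singleExcitationProj, E, add_mul, mul_add]

lemma exchange_pow_three (θ : ℝ) : exchange θ ^ 3 = exchange θ := by
  rw [pow_succ, exchange_sq, singleExcitationProj_mul_exchange]

lemma HIres_eq_smul_exchange (g a θ : ℝ) :
    HIres g a θ = (g : ℂ) • ((a : ℂ) • exchange θ ^ 2 + exchange θ) := by
  rw [exchange_sq, HIres, singleExcitationProj, exchange, add_assoc]

lemma zeeman_kronecker_one (ω : ℝ) :
    zeeman ω ⊗ₖ (1 : Matrix (Fin 2) (Fin 2) ℂ) = (ω : ℂ) • (E (1, 0) (1, 0) + E (1, 1) (1, 1)) := by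
  ext ⟨i, j⟩ ⟨k, l⟩
  fin_cases i <;> fin_cases j <;> fin_cases k <;> fin_cases l <;>
    simp [zeeman, σz, E, ← two_mul]

noncomputable def resonantPropagator (u : ℂ) (c s θ : ℝ) :
    Matrix (Fin 2 × Fin 2) (Fin 2 × Fin 2) ℂ :=
  1 - singleExcitationProj
    + u • ((c : ℂ) • singleExcitationProj - ((s : ℂ) * Complex.I) • exchange θ)

lemma exp_smul_HIres (g a θ t : ℝ) :
    exp ((-(t : ℂ) * Complex.I) • HIres g a θ)
      = resonantPropagator (Complex.exp ((-(g * t * a) : ℝ) * Complex.I))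
          (Real.cos (g * t)) (Real.sin (g * t)) θ := by
  have hgen : (-(t : ℂ) * Complex.I) • HIres g a θ
      = (-(g * t * a : ℝ) * Complex.I : ℂ) • exchange θ ^ 2
        + (-(g * t : ℝ) * Complex.I : ℂ) • exchange θ := by
    rw [HIres_eq_smul_exchange]; push_cast; module
  rw [hgen, exp_smul_sq_add_smul_of_pow_three_eq_self (exchange_pow_three θ), Complex.cosh_mul_I,
    Complex.sinh_mul_I, exchange_sq, Complex.cos_neg, Complex.sin_neg, ← Complex.ofReal_cos,
    ← Complex.ofReal_sin, resonantPropagator]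
  module

lemma trace_mul_heat_resonantPropagator (ω c s θ : ℝ) {u : ℂ} (hu : ‖u‖ = 1)
    (hcs : c ^ 2 + s ^ 2 = 1) (ρ : Matrix (Fin 2 × Fin 2) (Fin 2 × Fin 2) ℂ) :
    (ρ * ((resonantPropagator u c s θ)ᴴ * (zeeman ω ⊗ₖ (1 : Matrix (Fin 2) (Fin 2) ℂ))
        * resonantPropagator u c s θ - zeeman ω ⊗ₖ (1 : Matrix (Fin 2) (Fin 2) ℂ))).trace
      = ω * (s ^ 2 * (ρ (0, 1) (0, 1) - ρ (1, 0) (1, 0))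
          + c * s * Complex.I * (Complex.exp (θ * Complex.I) * ρ (1, 0) (0, 1)
            - Complex.exp (-θ * Complex.I) * ρ (0, 1) (1, 0))) := by
  have hu' : starRingEnd ℂ u * u = 1 := by rw [Complex.conj_mul', hu]; simp
  have hθ : Complex.exp (θ * Complex.I) * Complex.exp (-(θ * Complex.I)) = 1 := by
    rw [← Complex.exp_add]; simp
  have hθconj : starRingEnd ℂ (Complex.exp (-(θ * Complex.I))) = Complex.exp (θ * Complex.I) := by
    rw [← Complex.exp_conj]; simp
  have hcs' : (c : ℂ) ^ 2 + (s : ℂ) ^ 2 = 1 := by exact_mod_cast hcs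
  rw [zeeman_kronecker_one]
  simp only [trace, resonantPropagator, singleExcitationProj, E, Fin.isValue, smul_add,
    smul_single, smul_eq_mul, mul_one, exchange, neg_mul, conjTranspose_add, conjTranspose_sub,
    conjTranspose_one, conjTranspose_single, star_one, conjTranspose_smul, RCLike.star_def,
    Complex.conj_ofReal, star_mul', Complex.conj_I, mul_neg, hθconj, diag_apply, Matrix.mul_apply,
    Matrix.sub_apply, Matrix.add_apply, Matrix.one_apply, single_apply, Matrix.smul_apply,
    Fintype.sum_prod_type, Prod.mk.injEq, Fin.sum_univ_two, one_ne_zero, and_false, ↓reduceIte,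
    and_true, zero_add, false_and, add_zero, mul_ite, mul_zero, zero_ne_one, true_and, sub_zero,
    sub_self, ite_mul, one_mul, zero_mul, zero_sub, neg_neg, neg_zero]
  linear_combination (ω * s ^ 2 * ρ (0, 1) (0, 1) * Complex.exp (θ * Complex.I)
      * Complex.exp (-(θ * Complex.I))
    - ω * c * s * Complex.I * Complex.exp (-(θ * Complex.I)) * ρ (0, 1) (1, 0)
    + ω * c * s * Complex.I * Complex.exp (θ * Complex.I) * ρ (1, 0) (0, 1)
    + ω * c ^ 2 * ρ (1, 0) (1, 0)) * hu'
    + ω * s ^ 2 * ρ (0, 1) (0, 1) * hθ + ω * ρ (1, 0) (1, 0) * hcs'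
    - ω * s ^ 2 * ρ (0, 1) (0, 1) * starRingEnd ℂ u * u * Complex.exp (θ * Complex.I)
      * Complex.exp (-(θ * Complex.I)) * Complex.I_sq

theorem resonant_heat_formula_general
    (ω g a θ ξ η t : ℝ)
    (p01 p10 : ℝ)
    (ρ : Matrix (Fin 2 × Fin 2) (Fin 2 × Fin 2) ℂ) (hρ : ρ.IsHermitian)
    (h01 : ρ (0, 1) (0, 1) = (p01 : ℂ))
    (h10 : ρ (1, 0) (1, 0) = (p10 : ℂ))
    (hcoh : ρ (0, 1) (1, 0) = (η : ℂ) * Complex.exp (ξ * Complex.I))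
    (U : Matrix (Fin 2 × Fin 2) (Fin 2 × Fin 2) ℂ)
    (hU : U = exp ((-(t : ℂ) * Complex.I) • HIres g a θ)) :
    (ρ * (Uᴴ * (zeeman ω ⊗ₖ (1 : Matrix (Fin 2) (Fin 2) ℂ)) * U
        - zeeman ω ⊗ₖ (1 : Matrix (Fin 2) (Fin 2) ℂ))).trace
      = ((ω * ((p01 - p10) * Real.sin (g * t) ^ 2
          + η * Real.sin (2 * g * t) * Real.sin (ξ - θ)) : ℝ) : ℂ) := by
  have hcoh' : ρ (1, 0) (0, 1) = (η : ℂ) * Complex.exp (-ξ * Complex.I) := by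
    rw [← hρ.apply, hcoh]; simp [← Complex.exp_conj]
  have hphase : Complex.I * (Complex.exp (θ * Complex.I) * Complex.exp (-ξ * Complex.I)
      - Complex.exp (-θ * Complex.I) * Complex.exp (ξ * Complex.I))
      = 2 * Complex.sin (ξ - θ) := by
    rw [← Complex.exp_add, ← Complex.exp_add, Complex.sin]
    ring_nf
  rw [hU, exp_smul_HIres, trace_mul_heat_resonantPropagator _ _ _ _
    (Complex.norm_exp_ofReal_mul_I _) (Real.cos_sq_add_sin_sq _), h01, h10, hcoh, hcoh',
    mul_assoc 2 g t, Real.sin_two_mul]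
  push_cast
  linear_combination ω * η * Complex.sin (g * t) * Complex.cos (g * t) * hphase

/-- Resonant two-qubit heat formula:
`⟨Q_A⟩ = ω[(p₀₁ − p₁₀)sin²(gt) + η sin(2gt) sin(ξ − θ)]`. -/
theorem resonant_heat_formula
    (ω g a θ ξ η t : ℝ) (hg : 0 < g)
    (p00 p01 p10 p11 : ℝ)
    (ρ : Matrix (Fin 2 × Fin 2) (Fin 2 × Fin 2) ℂ) (hρ : ρ.IsHermitian)
    (hρ1 : ρ.trace = 1)
    (h00 : ρ (0, 0) (0, 0) = (p00 : ℂ)) (h01 : ρ (0, 1) (0, 1) = (p01 : ℂ))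
    (h10 : ρ (1, 0) (1, 0) = (p10 : ℂ)) (h11 : ρ (1, 1) (1, 1) = (p11 : ℂ))
    (hcoh : ρ (0, 1) (1, 0) = (η : ℂ) * Complex.exp (ξ * Complex.I))
    (U : Matrix (Fin 2 × Fin 2) (Fin 2 × Fin 2) ℂ)
    (hU : U = exp ((-(t : ℂ) * Complex.I) • HIres g a θ)) :
    (ρ * (Uᴴ * (zeeman ω ⊗ₖ (1 : Matrix (Fin 2) (Fin 2) ℂ)) * U
        - zeeman ω ⊗ₖ (1 : Matrix (Fin 2) (Fin 2) ℂ))).trace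
      = ((ω * ((p01 - p10) * Real.sin (g * t) ^ 2
          + η * Real.sin (2 * g * t) * Real.sin (ξ - θ)) : ℝ) : ℂ) :=
  resonant_heat_formula_general ω g a θ ξ η t p01 p10 ρ hρ h01 h10 hcoh U hU
end
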